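/- Let (X_n) be a uniformly bounded sequence of real random variables with X_n → 0 almost surely, and let (F_n) be a filtration. Then E[X_n | F_n] → 0 almost surely. -/

import Mathlib

/-!
Put `Y p = sup_{k ≥ p} |X k|`, so that `Y p ↓ 0` a.s. and `|E[X n | F n]| ≤ E[Y p | F n]` for
`n ≥ p`. By Lévy's upward theorem `E[Y p | F n] → E[Y p | F ∞]` as `n → ∞`, hence
`limsup |E[X n | F n]| ≤ E[Y p | F ∞]` for every `p`, and the right side decreases to `0` a.s.
because its integral `∫ Y p` does (monotone convergence).
-/

open MeasureTheory Filter Topology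

noncomputable def tailSupAbs (x : ℕ → ℝ) (p : ℕ) : ℝ := ⨆ k, |x (p + k)|

section TailSupAbs

variable {x : ℕ → ℝ}

theorem tailSupAbs_nonneg (x : ℕ → ℝ) (p : ℕ) : 0 ≤ tailSupAbs x p :=
  Real.iSup_nonneg fun _ => abs_nonneg _

theorem tailSupAbs_le {C : ℝ} (hC : ∀ n, |x n| ≤ C) (p : ℕ) : tailSupAbs x p ≤ C :=
  ciSup_le fun _ => hC _

theorem abs_le_tailSupAbs (hx : BddAbove (Set.range fun n => |x n|)) {p n : ℕ} (hpn : p ≤ n) :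
    |x n| ≤ tailSupAbs x p := by
  obtain ⟨k, rfl⟩ := Nat.exists_eq_add_of_le hpn
  exact le_ciSup (hx.mono (Set.range_comp_subset_range (p + ·) _)) k

theorem antitone_tailSupAbs (hx : BddAbove (Set.range fun n => |x n|)) :
    Antitone (tailSupAbs x) :=
  antitone_nat_of_succ_le fun _ => ciSup_le fun _ => abs_le_tailSupAbs hx (by omega)

theorem tendsto_tailSupAbs_zero (hx : Tendsto x atTop (𝓝 0)) :
    Tendsto (tailSupAbs x) atTop (𝓝 0) := by
  rw [Metric.tendsto_atTop] at hx ⊢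
  intro ε hε
  obtain ⟨N, hN⟩ := hx (ε / 2) (half_pos hε)
  refine ⟨N, fun p hp => ?_⟩
  have hsup : tailSupAbs x p ≤ ε / 2 := ciSup_le fun k => by
    simpa [Real.dist_0_eq_abs] using (hN (p + k) (by omega)).le
  rw [Real.dist_0_eq_abs, abs_of_nonneg (tailSupAbs_nonneg x p)]
  exact hsup.trans_lt (half_lt_self hε)

end TailSupAbs

theorem tendsto_zero_of_abs_le_of_tendsto {a z : ℕ → ℝ} {b : ℕ → ℕ → ℝ}
    (hab : ∀ p n, p ≤ n → |a n| ≤ b p n) (hb : ∀ p, Tendsto (b p) atTop (𝓝 (z p)))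
    (hz : Tendsto z atTop (𝓝 0)) : Tendsto a atTop (𝓝 0) := by
  rw [Metric.tendsto_nhds]
  intro ε hε
  obtain ⟨p, hp⟩ := (hz.eventually (gt_mem_nhds hε)).exists
  filter_upwards [(hb p).eventually (gt_mem_nhds hp), eventually_ge_atTop p] with n hbn hpn
  rw [Real.dist_0_eq_abs]
  exact (hab p n hpn).trans_lt hbn

section Integral

variable {α : Type*} {m : MeasurableSpace α} {μ : Measure α} {f : ℕ → α → ℝ}

theorem ae_tendsto_zero_of_antitone_of_tendsto_integral (hf : ∀ n, Integrable (f n) μ)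
    (hanti : ∀ᵐ x ∂μ, Antitone fun n => f n x) (hnonneg : ∀ᵐ x ∂μ, ∀ n, 0 ≤ f n x)
    (hintegral : Tendsto (fun n => ∫ x, f n x ∂μ) atTop (𝓝 0)) :
    ∀ᵐ x ∂μ, Tendsto (fun n => f n x) atTop (𝓝 0) := by
  set L : α → ℝ := fun x => ⨅ n, f n x
  have hL : ∀ᵐ x ∂μ, Tendsto (fun n => f n x) atTop (𝓝 (L x)) := by
    filter_upwards [hanti, hnonneg] with x hx h0
    exact tendsto_atTop_ciInf hx ⟨0, Set.forall_mem_range.2 h0⟩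
  have hL0 : 0 ≤ᵐ[μ] L := by
    filter_upwards [hnonneg] with x h0 using le_ciInf h0
  have hLint : Integrable L μ := by
    refine (hf 0).mono' (aestronglyMeasurable_of_tendsto_ae atTop (fun n => (hf n).1) hL) ?_
    filter_upwards [hnonneg, hL0] with x h0 hx0
    rw [Real.norm_of_nonneg hx0]
    exact ciInf_le ⟨0, Set.forall_mem_range.2 h0⟩ 0
  have hL_integral : ∫ x, L x ∂μ = 0 :=
    tendsto_nhds_unique (integral_tendsto_of_tendsto_of_antitone hf hLint hanti hL) hintegral
  filter_upwards [hL, (integral_eq_zero_iff_of_nonneg_ae hL0 hLint).1 hL_integral] with x hx hx0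
  rwa [hx0] at hx

theorem ae_tendsto_condExp_zero_of_antitone {G : MeasurableSpace α} (hG : G ≤ m)
    [SigmaFinite (μ.trim hG)] (hf : ∀ n, Integrable (f n) μ)
    (hanti : ∀ᵐ x ∂μ, Antitone fun n => f n x)
    (hlim : ∀ᵐ x ∂μ, Tendsto (fun n => f n x) atTop (𝓝 0)) :
    ∀ᵐ x ∂μ, Tendsto (fun n => μ[f n | G] x) atTop (𝓝 0) := by
  have hnonneg : ∀ n, 0 ≤ᵐ[μ] f n := fun n => by
    filter_upwards [hanti, hlim] with x hx hx0 using hx.le_of_tendsto hx0 n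
  refine ae_tendsto_zero_of_antitone_of_tendsto_integral (fun _ => integrable_condExp) ?_
    (ae_all_iff.2 fun n => condExp_nonneg (hnonneg n)) ?_
  · filter_upwards [ae_all_iff.2 fun n => condExp_mono (m := G) (hf (n + 1)) (hf n)
      (hanti.mono fun x hx => hx n.le_succ)] with x hx
    exact antitone_nat_of_succ_le hx
  · simp_rw [integral_condExp hG]
    simpa using integral_tendsto_of_tendsto_of_antitone hf (integrable_zero α ℝ μ) hanti hlim

theorem abs_condExp_le_condExp_of_abs_le {G : MeasurableSpace α} {g : α → ℝ}
    {h : α → ℝ} (hg : Integrable g μ) (hh : Integrable h μ) (hgh : ∀ᵐ x ∂μ, |g x| ≤ h x) :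
    ∀ᵐ x ∂μ, |μ[g | G] x| ≤ μ[h | G] x := by
  filter_upwards [abs_condExp_ae_le_condExp_abs (m := G) g, condExp_mono hg.abs hh hgh]
    with x h₁ h₂ using h₁.trans h₂

end Integral

/-- Chung, Theorem 9.4.8: if `X n → 0` a.s. and the `X n` are uniformly bounded,
then `E[X n | F n] → 0` a.s. for any filtration `(F n)`. -/
theorem condexp_tendsto_zero_of_tendsto_zero
    {Ω : Type*} {m : MeasurableSpace Ω} (μ : Measure Ω) [IsProbabilityMeasure μ]
    (F : Filtration ℕ m) (X : ℕ → Ω → ℝ) (C : ℝ)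
    (hbd : ∀ n ω, |X n ω| ≤ C)
    (hmeas : ∀ n, Measurable (X n))
    (hconv : ∀ᵐ ω ∂μ, Tendsto (fun n => X n ω) atTop (nhds 0)) :
    ∀ᵐ ω ∂μ, Tendsto (fun n => (μ[X n | F n]) ω) atTop (nhds 0) := by
  set Y : ℕ → Ω → ℝ := fun p ω => tailSupAbs (X · ω) p
  have hbdd : ∀ ω, BddAbove (Set.range fun n => |X n ω|) := fun ω =>
    ⟨C, Set.forall_mem_range.2 (hbd · ω)⟩
  have hX : ∀ n, Integrable (X n) μ := fun n =>
    .of_bound (hmeas n).aestronglyMeasurable C (ae_of_all _ (hbd n))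
  have hY : ∀ p, Integrable (Y p) μ := fun p =>
    .of_bound (Measurable.iSup fun _ => (hmeas _).abs).aestronglyMeasurable C
      (ae_of_all _ fun ω => (Real.norm_of_nonneg (tailSupAbs_nonneg _ p)).trans_le
        (tailSupAbs_le (hbd · ω) p))
  have hYlim := ae_tendsto_condExp_zero_of_antitone (iSup_le F.le) hY
    (ae_of_all _ fun ω => antitone_tailSupAbs (hbdd ω))
    (hconv.mono fun _ => tendsto_tailSupAbs_zero)
  have hlevy : ∀ᵐ ω ∂μ, ∀ p, Tendsto (fun n => μ[Y p | F n] ω) atTop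
      (𝓝 (μ[Y p | ⨆ n, F n] ω)) :=
    ae_all_iff.2 fun p => tendsto_ae_condExp (Y p)
  have hdom : ∀ᵐ ω ∂μ, ∀ p n, p ≤ n → |μ[X n | F n] ω| ≤ μ[Y p | F n] ω := by
    refine ae_all_iff.2 fun p => ae_all_iff.2 fun n => ?_
    by_cases hpn : p ≤ n
    · exact (abs_condExp_le_condExp_of_abs_le (hX n) (hY p)
        (ae_of_all _ fun ω => abs_le_tailSupAbs (hbdd ω) hpn)).mono fun _ h _ => h
    · exact ae_of_all _ fun _ h => absurd h hpn
  filter_upwards [hYlim, hlevy, hdom] with ω hYω hlevyω hdomω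
  exact tendsto_zero_of_abs_le_of_tendsto hdomω hlevyω hYω
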